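/- Let T be a refinement of the least-resolved tree T_ε of a Fitch map ε. Define λ on E(T) by λ({parent(v),v}) = λ_ε({parent(v'),v'}) if some vertex v' of T_ε satisfies L(T(v)) = L(T_ε(v')), and λ(e) = ∅ otherwise. Then (T,λ) explains ε and has minimal total label count: Σ_{e ∈ E(T)} |λ(e)| = Σ_{e ∈ E(T_ε)} |λ_ε(e)|; moreover, λ is the unique labeling on T that explains ε and attains this minimum. -/
import Mathlib


/-- A rooted phylogenetic tree with leaf set `L`: a finite vertex type `V`,
a root, a parent map (the root is its own parent), every vertex reaches the
root by iterating `parent`, the leaves are exactly the vertices without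
children and are in bijection with `L`, and every inner vertex has at least
two children. -/
structure PhyloTree (L : Type) : Type 1 where
  V : Type
  fintypeV : Fintype V
  root : V
  parent : V → V
  leaf : L → V
  parent_root : parent root = root
  reach : ∀ v : V, ∃ n : ℕ, parent^[n] v = root
  leaf_inj : Function.Injective leaf
  leaf_iff : ∀ v : V, (∀ u : V, parent u = v → u = v) ↔ ∃ x : L, leaf x = v
  phylo : ∀ v : V, (¬ ∃ x : L, leaf x = v) →
      ∃ u u' : V, u ≠ u' ∧ parent u = v ∧ parent u' = v ∧ u ≠ v ∧ u' ≠ v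

namespace PhyloTree

variable {L : Type} (T : PhyloTree L)

/-- `v` is an ancestor (or equal) of `w`. -/
def anc (v w : T.V) : Prop := ∃ n : ℕ, T.parent^[n] w = v

def isLeaf (v : T.V) : Prop := ∃ x : L, T.leaf x = v

/-- The cluster `L(T(v))`: the set of leaves below `v`. -/
def cluster (v : T.V) : Set L := {x : L | T.anc v (T.leaf x)}

/-- The cluster system `H(T)`. -/
def clusters : Set (Set L) := Set.range T.cluster

/-- `w` is the last common ancestor of the leaves `x` and `y`. -/
def isLCA (x y : L) (w : T.V) : Prop :=
  T.anc w (T.leaf x) ∧ T.anc w (T.leaf y) ∧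
    ∀ u : T.V, T.anc u (T.leaf x) → T.anc u (T.leaf y) → T.anc u w

/-- `u` is a child of `v`. -/
def childOf (u v : T.V) : Prop := T.parent u = v ∧ u ≠ v

/-- The edge `{parent u, u}` (encoded by its lower endpoint `u`) is an inner edge. -/
def innerEdge (u : T.V) : Prop := T.parent u ≠ u ∧ ¬ T.isLeaf u

/-- The edge `{parent u, u}` lies on the path from the vertex `w` down to the leaf `y`. -/
def onPath (w : T.V) (y : L) (u : T.V) : Prop :=
  T.anc w u ∧ u ≠ w ∧ T.anc u (T.leaf y)

/-- The vertex-labeled tree `(T,t)` explains `δ`. -/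
def ExplainsDelta {M : Type} (t : T.V → M) (δ : L → L → M) : Prop :=
  ∀ x y : L, x ≠ y → ∀ w : T.V, T.isLCA x y w → t w = δ x y

/-- The edge-labeled tree `(T,λ)` explains `ε`; edge labels are encoded on the
lower endpoint of each edge. -/
def ExplainsEps {N : Type} (lam : T.V → Finset N) (ε : L → L → Finset N) : Prop :=
  ∀ x y : L, x ≠ y → ∀ w : T.V, T.isLCA x y w →
    ∀ k : N, k ∈ ε x y ↔ ∃ u : T.V, T.onPath w y u ∧ k ∈ lam u

/-- The vertex labeling is discriminating: the endpoints of every inner edge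
carry distinct labels. -/
def Discriminating {M : Type} (t : T.V → M) : Prop :=
  ∀ u : T.V, T.innerEdge u → t u ≠ t (T.parent u)

/-- Total number of labels over all edges, `Σ_{e ∈ E(T)} |λ(e)|`. -/
noncomputable def labelSum {N : Type} (lam : T.V → Finset N) : ℕ :=
  letI := T.fintypeV
  letI := Classical.decEq T.V
  ∑ v : T.V, if T.parent v = v then 0 else (lam v).card

/-- Condition (C): every inner vertex has a child joined by an empty-labeled edge. -/
def CondC {N : Type} (lam : T.V → Finset N) : Prop :=
  ∀ v : T.V, ¬ T.isLeaf v → ∃ u : T.V, T.childOf u v ∧ lam u = ∅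

/-- Condition (C1): if `t(v) ∈ M₀` then all edges from `v` to its children are empty. -/
def CondC1 {M N : Type} (t : T.V → M) (lam : T.V → Finset N) (M0 : Set M) : Prop :=
  ∀ v u : T.V, T.childOf u v → t v ∈ M0 → lam u = ∅

/-- Condition (C2): at every vertex, at most one edge to a child is nonempty. -/
def CondC2 {N : Type} (lam : T.V → Finset N) : Prop :=
  ∀ v u u' : T.V, T.childOf u v → T.childOf u' v → lam u ≠ ∅ → lam u' ≠ ∅ → u = u'

/-- `(T1,λ1) ≤ (T2,λ2)`: the edge-labeled tree `(T2,λ2)` refines `(T1,λ1)`. -/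
def LeLabeled {N : Type} (T1 : PhyloTree L) (lam1 : T1.V → Finset N)
    (T2 : PhyloTree L) (lam2 : T2.V → Finset N) : Prop :=
  T1.clusters ⊆ T2.clusters ∧
    ∀ (v1 : T1.V) (v2 : T2.V), T1.parent v1 ≠ v1 → T2.parent v2 ≠ v2 →
      T1.cluster v1 = T2.cluster v2 → lam1 v1 ⊆ lam2 v2

/-- `φ` witnesses that `T'` is obtained from `T` by contracting the inner edge
`{parent u, u}`. -/
def IsContractionMap (T : PhyloTree L) (u : T.V) (T' : PhyloTree L)
    (φ : T.V → T'.V) : Prop :=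
  T.innerEdge u ∧ Function.Surjective φ ∧ φ u = φ (T.parent u) ∧
    (∀ a b : T.V, φ a = φ b →
      a = b ∨ (a = u ∧ b = T.parent u) ∨ (b = u ∧ a = T.parent u)) ∧
    (∀ v : T.V, v ≠ u → T'.parent (φ v) = φ (T.parent v)) ∧
    (∀ x : L, φ (T.leaf x) = T'.leaf x) ∧ φ T.root = T'.root

/-- `T'` is obtained from `T` by contracting the inner edge `{parent u, u}`. -/
def ContractEdge (T : PhyloTree L) (u : T.V) (T' : PhyloTree L) : Prop :=
  ∃ φ : T.V → T'.V, IsContractionMap T u T' φ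

/-- Isomorphism of rooted trees on the same leaf set. -/
def Isomorphic (T1 T2 : PhyloTree L) : Prop :=
  ∃ φ : T1.V ≃ T2.V, (∀ v : T1.V, φ (T1.parent v) = T2.parent (φ v)) ∧
    ∀ x : L, φ (T1.leaf x) = T2.leaf x

def IsSymbolicUltrametric {M : Type} (δ : L → L → M) : Prop :=
  ∃ (T : PhyloTree L) (t : T.V → M), T.ExplainsDelta t δ

def IsFitchMap {N : Type} (ε : L → L → Finset N) : Prop :=
  ∃ (T : PhyloTree L) (lam : T.V → Finset N), T.ExplainsEps lam ε

def TreeLike {M N : Type} (δ : L → L → M) (ε : L → L → Finset N) : Prop :=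
  ∃ (T : PhyloTree L) (t : T.V → M) (lam : T.V → Finset N),
    T.ExplainsDelta t δ ∧ T.ExplainsEps lam ε

def MTreeLike {M N : Type} (δ : L → L → M) (ε : L → L → Finset N) (M0 : Set M) : Prop :=
  ∃ (T : PhyloTree L) (t : T.V → M) (lam : T.V → Finset N),
    T.ExplainsDelta t δ ∧ T.ExplainsEps lam ε ∧ T.CondC lam ∧ T.CondC1 t lam M0

end PhyloTree

/-- A hierarchy on `L`. -/
def IsHierarchy {L : Type} (H : Set (Set L)) : Prop :=
  Set.univ ∈ H ∧ (∀ x : L, {x} ∈ H) ∧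
    (∀ A ∈ H, ∀ B ∈ H, A ∩ B = A ∨ A ∩ B = B ∨ A ∩ B = (∅ : Set L)) ∧
    (∅ : Set L) ∉ H
namespace PhyloTree

variable {L : Type} {T : PhyloTree L}

lemma anc_refl (v : T.V) : T.anc v v := ⟨0, rfl⟩

lemma anc_trans {u v w : T.V} (h1 : T.anc u v) (h2 : T.anc v w) : T.anc u w := by
  obtain ⟨n, hn⟩ := h1; obtain ⟨m, hm⟩ := h2
  exact ⟨n + m, by rw [Function.iterate_add_apply, hm, hn]⟩

lemma root_anc (v : T.V) : T.anc T.root v := T.reach v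

lemma anc_root_eq {v : T.V} (h : T.anc v T.root) : v = T.root := by
  obtain ⟨n, hn⟩ := h
  rw [Function.iterate_fixed T.parent_root] at hn
  exact hn.symm

lemma parent_eq_iff_root {v : T.V} : T.parent v = v ↔ v = T.root := by
  constructor
  · intro h
    obtain ⟨n, hn⟩ := T.reach v
    rw [Function.iterate_fixed h] at hn
    exact hn
  · rintro rfl; exact T.parent_root

lemma anc_antisymm {u v : T.V} (h1 : T.anc u v) (h2 : T.anc v u) : u = v := by
  obtain ⟨n, hn⟩ := h1
  obtain ⟨m, hm⟩ := h2
  rcases Nat.eq_zero_or_pos (m + n) with h | hpos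
  · have hn0 : n = 0 := by omega
    rw [hn0] at hn; exact hn.symm
  · have cyc : T.parent^[m + n] v = v := by
      rw [Function.iterate_add_apply, hn, hm]
    have key : ∀ k, T.parent^[k * (m + n)] v = v := by
      intro k; induction k with
      | zero => simp
      | succ k ih => rw [Nat.succ_mul, Function.iterate_add_apply, cyc, ih]
    obtain ⟨r, hr⟩ := T.reach v
    have hge : r ≤ r * (m + n) := Nat.le_mul_of_pos_right r hpos
    have hv : v = T.root := by
      have := key r
      rw [show r * (m + n) = (r * (m + n) - r) + r by omega,
        Function.iterate_add_apply, hr, Function.iterate_fixed T.parent_root] at this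
      exact this.symm
    subst hv
    rw [Function.iterate_fixed T.parent_root] at hn
    exact hn.symm

lemma anc_comparable {u v w : T.V} (h1 : T.anc u w) (h2 : T.anc v w) :
    T.anc u v ∨ T.anc v u := by
  obtain ⟨n, hn⟩ := h1
  obtain ⟨m, hm⟩ := h2
  rcases le_total n m with h | h
  · right
    exact ⟨m - n, by rw [← hn, ← Function.iterate_add_apply, Nat.sub_add_cancel h, hm]⟩
  · left
    exact ⟨n - m, by rw [← hm, ← Function.iterate_add_apply, Nat.sub_add_cancel h, hn]⟩

lemma anc_parent {u : T.V} : T.anc (T.parent u) u := ⟨1, by simp⟩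

lemma mem_cluster {x : L} {v : T.V} : x ∈ T.cluster v ↔ T.anc v (T.leaf x) := Iff.rfl

lemma cluster_root : T.cluster T.root = Set.univ :=
  Set.eq_univ_of_forall fun x => root_anc _

lemma exists_leaf_below (v : T.V) : ∃ x : L, T.anc v (T.leaf x) := by
  letI := T.fintypeV
  classical
  have H : ∀ n (v : T.V), (Finset.univ.filter (fun w => T.anc v w)).card ≤ n →
      ∃ x, T.anc v (T.leaf x) := by
    intro n
    induction n with
    | zero =>
      intro v hv
      exfalso
      have hmem : v ∈ Finset.univ.filter (fun w => T.anc v w) := by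
        simp [anc_refl]
      have := Finset.card_pos.mpr ⟨v, hmem⟩
      omega
    | succ n ih =>
      intro v hv
      by_cases hl : T.isLeaf v
      · obtain ⟨x, hx⟩ := hl
        exact ⟨x, hx ▸ anc_refl _⟩
      · obtain ⟨a, b, hab, ha, hb, hav, hbv⟩ := T.phylo v hl
        have hanc : T.anc v a := ha ▸ anc_parent
        have hsub : Finset.univ.filter (fun w => T.anc a w) ⊆
            Finset.univ.filter (fun w => T.anc v w) := by
          intro w hw
          simp only [Finset.mem_filter, Finset.mem_univ, true_and] at hw ⊢
          exact anc_trans hanc hw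
        have hvnot : v ∉ Finset.univ.filter (fun w => T.anc a w) := by
          simp only [Finset.mem_filter, Finset.mem_univ, true_and]
          intro hva
          exact hav (anc_antisymm hva hanc)
        have hcard : (Finset.univ.filter (fun w => T.anc a w)).card <
            (Finset.univ.filter (fun w => T.anc v w)).card :=
          Finset.card_lt_card ⟨hsub, fun hs => hvnot (hs (by simp [anc_refl]))⟩
        obtain ⟨x, hx⟩ := ih a (by omega)
        exact ⟨x, anc_trans hanc hx⟩
  exact H _ v le_rfl

lemma sibling_disjoint {u u' v : T.V} (hu : T.parent u = v) (hu' : T.parent u' = v)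
    (hne : u ≠ u') (huv : u ≠ v) (hu'v : u' ≠ v) {w : T.V}
    (h1 : T.anc u w) (h2 : T.anc u' w) : False := by
  have key : ∀ a b : T.V, T.parent a = v → a ≠ v → T.anc a b → T.parent b = v →
      a ≠ b → False := by
    rintro a b ha hav ⟨n, hn⟩ hb hab
    cases n with
    | zero => exact hab hn.symm
    | succ n =>
      rw [Function.iterate_succ_apply, hb] at hn
      exact hav (anc_antisymm ⟨n, hn⟩ (ha ▸ anc_parent))
  rcases anc_comparable h1 h2 with h | h
  · exact key u u' hu huv h hu' hne
  · exact key u' u hu' hu'v h hu hne.symm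

lemma exists_sibling_leaf {u : T.V} (h : T.parent u ≠ u) :
    ∃ x : L, x ∈ T.cluster (T.parent u) ∧ x ∉ T.cluster u := by
  have hnl : ¬ T.isLeaf (T.parent u) := by
    intro hl
    exact h ((T.leaf_iff (T.parent u)).2 hl u rfl).symm
  obtain ⟨a, b, hab, ha, hb, hav, hbv⟩ := T.phylo (T.parent u) hnl
  have : ∃ u' : T.V, T.parent u' = T.parent u ∧ u' ≠ u ∧ u' ≠ T.parent u := by
    by_cases hau : a = u
    · exact ⟨b, hb, fun hbu => hab (hau.trans hbu.symm), hbv⟩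
    · exact ⟨a, ha, hau, hav⟩
  obtain ⟨u', hp, hu'u, hu'v⟩ := this
  obtain ⟨x, hx⟩ := exists_leaf_below u'
  refine ⟨x, anc_trans (hp ▸ anc_parent) hx, fun hxu => ?_⟩
  exact sibling_disjoint rfl hp (Ne.symm hu'u) (Ne.symm h) hu'v hxu hx

lemma cluster_ne_univ {u : T.V} (h : T.parent u ≠ u) : T.cluster u ≠ Set.univ := by
  obtain ⟨x, _, hx2⟩ := exists_sibling_leaf h
  intro hu
  exact hx2 (hu ▸ Set.mem_univ x)

lemma parent_ne_of_not_mem_cluster {u : T.V} {x : L} (h : x ∉ T.cluster u) :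
    T.parent u ≠ u := by
  intro hp
  have hr := parent_eq_iff_root.1 hp
  exact h (hr ▸ (cluster_root (T := T)) ▸ Set.mem_univ x)

lemma cluster_ssubset {v w : T.V} (h : T.anc v w) (hne : v ≠ w) :
    ∃ x : L, x ∈ T.cluster v ∧ x ∉ T.cluster w := by
  have hwr : T.parent w ≠ w := by
    intro hp
    have := parent_eq_iff_root.1 hp
    subst this
    exact hne (anc_root_eq h)
  obtain ⟨x, hx1, hx2⟩ := exists_sibling_leaf hwr
  refine ⟨x, ?_, hx2⟩
  obtain ⟨n, hn⟩ := h
  cases n with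
  | zero => exact absurd hn.symm hne
  | succ n =>
    rw [Function.iterate_succ_apply] at hn
    exact anc_trans ⟨n, hn⟩ hx1

lemma cluster_injective {v w : T.V} (h : T.cluster v = T.cluster w) : v = w := by
  obtain ⟨x, hx⟩ := exists_leaf_below (T := T) v
  have hxw : T.anc w (T.leaf x) := by rw [← mem_cluster, ← h]; exact hx
  rcases anc_comparable hxw hx with hc | hc
  · by_contra hne
    obtain ⟨y, hy1, hy2⟩ := cluster_ssubset hc (Ne.symm hne)
    rw [← h] at hy1; exact hy2 hy1
  · by_contra hne
    obtain ⟨y, hy1, hy2⟩ := cluster_ssubset hc hne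
    rw [h] at hy1; exact hy2 hy1

lemma exists_isLCA (x y : L) : ∃ w : T.V, T.isLCA x y w := by
  letI := T.fintypeV
  classical
  set S := Finset.univ.filter (fun w => T.anc w (T.leaf x) ∧ T.anc w (T.leaf y)) with hS
  have hSne : S.Nonempty := ⟨T.root, by simp [hS, root_anc]⟩
  obtain ⟨w, hw, hmin⟩ := S.exists_min_image
    (fun v => (Finset.univ.filter (fun z => T.anc v z)).card) hSne
  simp only [hS, Finset.mem_filter, Finset.mem_univ, true_and] at hw
  refine ⟨w, hw.1, hw.2, fun u hux huy => ?_⟩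
  rcases anc_comparable hux hw.1 with h | h
  · -- anc u w
    exact h
  · -- anc w u
    by_cases hew : w = u
    · exact hew ▸ anc_refl w
    have hsub : Finset.univ.filter (fun z => T.anc u z) ⊆
        Finset.univ.filter (fun z => T.anc w z) := by
      intro z hz
      simp only [Finset.mem_filter, Finset.mem_univ, true_and] at hz ⊢
      exact anc_trans h hz
    have hwnot : w ∉ Finset.univ.filter (fun z => T.anc u z) := by
      simp only [Finset.mem_filter, Finset.mem_univ, true_and]
      intro hcon
      exact hew (anc_antisymm hcon h).symm
    have hcard : (Finset.univ.filter (fun z => T.anc u z)).card <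
        (Finset.univ.filter (fun z => T.anc w z)).card :=
      Finset.card_lt_card ⟨hsub, fun hs => hwnot (hs (by simp [anc_refl]))⟩
    have := hmin u (by simp [hS, hux, huy])
    omega

lemma onPath_iff {x y : L} {w : T.V} (hw : T.isLCA x y w) (u : T.V) :
    T.onPath w y u ↔ T.anc u (T.leaf y) ∧ x ∉ T.cluster u := by
  obtain ⟨hwx, hwy, hmin⟩ := hw
  constructor
  · rintro ⟨hwu, hne, huy⟩
    exact ⟨huy, fun hx => hne (anc_antisymm (hmin u hx huy) hwu)⟩
  · rintro ⟨huy, hx⟩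
    have hne : u ≠ w := fun h => hx (h ▸ hwx)
    rcases anc_comparable hwy huy with h | h
    · exact ⟨h, hne, huy⟩
    · exact absurd (anc_trans h hwx) hx

end PhyloTree
section Statement8Aux

variable {L N : Type}

lemma labelSum_eq_sum_filter (S : PhyloTree L) (l : S.V → Finset N) :
    S.labelSum l =
      letI := S.fintypeV
      letI : DecidablePred (fun v : S.V => S.parent v ≠ v ∧ l v ≠ ∅) := Classical.decPred _
      ∑ v ∈ (Finset.univ.filter (fun v => S.parent v ≠ v ∧ l v ≠ ∅)), (l v).card := by
  letI := S.fintypeV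
  letI := Classical.decEq S.V
  letI : DecidablePred (fun v : S.V => S.parent v ≠ v ∧ l v ≠ ∅) := Classical.decPred _
  unfold PhyloTree.labelSum
  rw [show (∑ v ∈ (Finset.univ.filter (fun v => S.parent v ≠ v ∧ l v ≠ ∅)), (l v).card)
      = ∑ v ∈ (Finset.univ.filter (fun v => S.parent v ≠ v ∧ l v ≠ ∅)),
        (if S.parent v = v then 0 else (l v).card) from
    Finset.sum_congr rfl (fun v hv => by
      simp only [Finset.mem_filter] at hv
      rw [if_neg hv.2.1])]
  exact (Finset.sum_subset (Finset.subset_univ _) (fun v _ hv => by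
    simp only [Finset.mem_filter, Finset.mem_univ, true_and, not_and, not_not] at hv
    by_cases h : S.parent v = v
    · rw [if_pos h]
    · rw [if_neg h, hv h, Finset.card_empty])).symm

end Statement8Aux
/-- Let `T` refine the least-resolved tree `T_ε` of a Fitch map
`ε` and let `λ` carry over the labels of `λ_ε` (empty on all other edges).  Then
`(T,λ)` explains `ε` with minimal total label count
`Σ_{e∈E(T)} |λ(e)| = Σ_{e∈E(T_ε)} |λ_ε(e)|`, and `λ` is the unique such labeling. -/
theorem statement8 {L N : Type} (ε : L → L → Finset N) (Tε : PhyloTree L)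
    (lamε : Tε.V → Finset N) (hexp : Tε.ExplainsEps lamε ε)
    (hleast : ∀ (T' : PhyloTree L) (lam' : T'.V → Finset N),
      T'.ExplainsEps lam' ε → PhyloTree.LeLabeled Tε lamε T' lam')
    (T : PhyloTree L) (href : Tε.clusters ⊆ T.clusters)
    (lam : T.V → Finset N)
    (hlam1 : ∀ (v : T.V) (v' : Tε.V), T.parent v ≠ v → Tε.parent v' ≠ v' →
      T.cluster v = Tε.cluster v' → lam v = lamε v')
    (hlam2 : ∀ v : T.V, T.parent v ≠ v →
      (∀ v' : Tε.V, Tε.parent v' ≠ v' → T.cluster v ≠ Tε.cluster v') → lam v = ∅) :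
    T.ExplainsEps lam ε ∧ T.labelSum lam = Tε.labelSum lamε ∧
      ∀ lam' : T.V → Finset N, T.ExplainsEps lam' ε →
        T.labelSum lam' = Tε.labelSum lamε →
        ∀ v : T.V, T.parent v ≠ v → lam' v = lam v := by
  classical
  letI := T.fintypeV
  letI := Tε.fintypeV
  -- Part 1: (T, lam) explains ε
  have part1 : T.ExplainsEps lam ε := by
    intro x y hxy w hw k
    obtain ⟨wε, hwε⟩ := PhyloTree.exists_isLCA (T := Tε) x y
    rw [hexp x y hxy wε hwε k]
    constructor
    · rintro ⟨u', hpath, hk⟩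
      obtain ⟨huy, hxnot⟩ := (PhyloTree.onPath_iff hwε u').1 hpath
      have hu'root : Tε.parent u' ≠ u' := PhyloTree.parent_ne_of_not_mem_cluster hxnot
      obtain ⟨v, hv⟩ := href ⟨u', rfl⟩
      have hxv : x ∉ T.cluster v := by rw [hv]; exact hxnot
      have hvroot : T.parent v ≠ v := PhyloTree.parent_ne_of_not_mem_cluster hxv
      have hyv : T.anc v (T.leaf y) := by
        rw [← PhyloTree.mem_cluster, hv]; exact huy
      refine ⟨v, (PhyloTree.onPath_iff hw v).2 ⟨hyv, hxv⟩, ?_⟩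
      rw [hlam1 v u' hvroot hu'root hv]; exact hk
    · rintro ⟨u, hpath, hk⟩
      obtain ⟨huy, hxnot⟩ := (PhyloTree.onPath_iff hw u).1 hpath
      have huroot : T.parent u ≠ u := PhyloTree.parent_ne_of_not_mem_cluster hxnot
      have hex : ∃ v', Tε.parent v' ≠ v' ∧ T.cluster u = Tε.cluster v' := by
        by_contra hcon
        push_neg at hcon
        rw [hlam2 u huroot hcon] at hk
        exact absurd hk (Finset.notMem_empty k)
      obtain ⟨v', hv'root, hcv⟩ := hex
      have hxv' : x ∉ Tε.cluster v' := by rw [← hcv]; exact hxnot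
      have hyv' : Tε.anc v' (Tε.leaf y) := by
        rw [← PhyloTree.mem_cluster, ← hcv]; exact huy
      refine ⟨v', (PhyloTree.onPath_iff hwε v').2 ⟨hyv', hxv'⟩, ?_⟩
      rw [← hlam1 u v' huroot hv'root hcv]; exact hk
  -- matching maps
  have hmatch : ∀ v' : Tε.V, ∃ v : T.V, T.cluster v = Tε.cluster v' :=
    fun v' => href ⟨v', rfl⟩
  choose G hG using hmatch
  have hmatch2 : ∀ v : T.V, ∃ v' : Tε.V,
      (T.parent v ≠ v ∧ lam v ≠ ∅) →
        (Tε.parent v' ≠ v' ∧ T.cluster v = Tε.cluster v') := by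
    intro v
    by_cases h : T.parent v ≠ v ∧ lam v ≠ ∅
    · have hex : ∃ v', Tε.parent v' ≠ v' ∧ T.cluster v = Tε.cluster v' := by
        by_contra hcon
        push_neg at hcon
        exact h.2 (hlam2 v h.1 hcon)
      obtain ⟨v', hv'⟩ := hex
      exact ⟨v', fun _ => hv'⟩
    · exact ⟨Tε.root, fun hc => absurd hc h⟩
  choose F hF using hmatch2
  -- Part 2: sums agree
  have part2 : T.labelSum lam = Tε.labelSum lamε := by
    rw [labelSum_eq_sum_filter T lam, labelSum_eq_sum_filter Tε lamε]
    refine Finset.sum_nbij' F G ?_ ?_ ?_ ?_ ?_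
    · intro v hv
      simp only [Finset.mem_filter, Finset.mem_univ, true_and] at hv ⊢
      obtain ⟨h1, h2⟩ := hF v hv
      refine ⟨h1, ?_⟩
      rw [← hlam1 v (F v) hv.1 h1 h2]
      exact hv.2
    · intro v' hv'
      simp only [Finset.mem_filter, Finset.mem_univ, true_and] at hv' ⊢
      have hroot : T.parent (G v') ≠ G v' := by
        intro hp
        have := PhyloTree.cluster_ne_univ hv'.1
        rw [← hG v', PhyloTree.parent_eq_iff_root.1 hp, PhyloTree.cluster_root] at this
        exact this rfl
      refine ⟨hroot, ?_⟩
      rw [hlam1 (G v') v' hroot hv'.1 (hG v')]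
      exact hv'.2
    · intro v hv
      simp only [Finset.mem_filter, Finset.mem_univ, true_and] at hv
      exact PhyloTree.cluster_injective ((hG (F v)).trans (hF v hv).2.symm)
    · intro v' hv'
      simp only [Finset.mem_filter, Finset.mem_univ, true_and] at hv'
      have hroot : T.parent (G v') ≠ G v' := by
        intro hp
        have := PhyloTree.cluster_ne_univ hv'.1
        rw [← hG v', PhyloTree.parent_eq_iff_root.1 hp, PhyloTree.cluster_root] at this
        exact this rfl
      have hGne : lam (G v') ≠ ∅ := by
        rw [hlam1 (G v') v' hroot hv'.1 (hG v')]
        exact hv'.2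
      have := (hF (G v') ⟨hroot, hGne⟩).2
      exact PhyloTree.cluster_injective (T := Tε) (((hG v').symm.trans this).symm)
    · intro v hv
      simp only [Finset.mem_filter, Finset.mem_univ, true_and] at hv
      obtain ⟨h1, h2⟩ := hF v hv
      rw [hlam1 v (F v) hv.1 h1 h2]
  refine ⟨part1, part2, ?_⟩
  -- Part 3: uniqueness
  intro lam' hexp' hsum' v hv
  have hle := (hleast T lam' hexp').2
  have hsub : ∀ u : T.V, T.parent u ≠ u → lam u ⊆ lam' u := by
    intro u hu
    by_cases h : ∃ v', Tε.parent v' ≠ v' ∧ T.cluster u = Tε.cluster v'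
    · obtain ⟨v', hv', hc⟩ := h
      rw [hlam1 u v' hu hv' hc]
      exact hle v' u hv' hu hc.symm
    · push_neg at h
      rw [hlam2 u hu h]
      exact Finset.empty_subset _
  have hsum_eq : T.labelSum lam = T.labelSum lam' := by rw [part2, hsum']
  unfold PhyloTree.labelSum at hsum_eq
  have hpt : ∀ u ∈ (Finset.univ : Finset T.V),
      (if T.parent u = u then 0 else (lam u).card) ≤
        (if T.parent u = u then 0 else (lam' u).card) := by
    intro u _
    by_cases h : T.parent u = u
    · rw [if_pos h, if_pos h]
    · rw [if_neg h, if_neg h]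
      exact Finset.card_le_card (hsub u h)
  have hcard := (Finset.sum_eq_sum_iff_of_le hpt).1 hsum_eq v (Finset.mem_univ v)
  rw [if_neg hv, if_neg hv] at hcard
  exact (Finset.eq_of_subset_of_card_le (hsub v hv) hcard.ge).symm
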